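/- arXiv:2603.02043 — 2 statements merged into one kernel-verified Lean document; each statement's English description precedes it below -/
import Mathlib

section
/- Level-set growth for finite classes under bounded loss: Let ℋ be a finite hypothesis class with |ℋ| ≥ 2 and let the loss satisfy 0 ≤ ℓ(y', y) ≤ M for all y', y. Let μ be the counting measure on ℋ and let 𝒯 = {M, 2M, …, N·M} with N = ⌈12 ln|ℋ|⌉. Then the number of tolerances t ∈ 𝒯 for which μ(ℋ_{t+M}) > 2·μ(ℋ_{t−M}) is at most 3 ln|ℋ|; consequently, at least (3/4)·|𝒯| tolerances t ∈ 𝒯 satisfy both μ(ℋ_{t+M}) ≤ 2·μ(ℋ_{t−M}) and ℋ_{t−M} ⊆ ℋ_{t,i} ⊆ ℋ_{t+M} for all i ∈ {1,…,n}. -/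
/-!
Deleting the `i`-th sample lowers every empirical risk by an amount in `[0, M]`, which sandwiches
the leave-one-out level sets between `ℋ_{t-M}` and `ℋ_{t+M}`.

For the count, `c k = |ℋ_{kM-M}|` is nondecreasing with values in `[1, |ℋ|]` for `k ≥ 1`, so the
increments `log c (k + 2) - log c k` are nonnegative and telescope to at most `2 log |ℋ|`. Each
tolerance at which the level set more than doubles contributes more than `log 2 > 2 / 3`, so there
are at most `3 log |ℋ| ≤ N / 4` of them.
-/

open Finset Real
open scoped Classical

theorem sum_Icc_one_sub_add_two (u : ℕ → ℝ) (N : ℕ) :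
    ∑ k ∈ Icc 1 N, (u (k + 2) - u k) = u (N + 1) + u (N + 2) - u 1 - u 2 := by
  induction N with
  | zero => simp
  | succ N ih =>
    rw [sum_Icc_succ_top (by omega), ih]
    ring

theorem card_filter_mul_le_sum {ι : Type*} (s : Finset ι) (p : ι → Prop) [DecidablePred p]
    {f : ι → ℝ} (hf : ∀ i ∈ s, 0 ≤ f i) {δ : ℝ} (hp : ∀ i ∈ s, p i → δ ≤ f i) :
    (#{i ∈ s | p i} : ℝ) * δ ≤ ∑ i ∈ s, f i :=
  calc (#{i ∈ s | p i} : ℝ) * δ = #{i ∈ s | p i} • δ := (nsmul_eq_mul _ _).symm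
    _ ≤ ∑ i ∈ s with p i, f i :=
      card_nsmul_le_sum _ _ _ fun i hi ↦ hp i (mem_filter.1 hi).1 (mem_filter.1 hi).2
    _ ≤ ∑ i ∈ s, f i := sum_le_sum_of_subset_of_nonneg (filter_subset _ _) fun i hi _ ↦ hf i hi

theorem card_filter_two_mul_lt_le {c : ℕ → ℕ} (hc : Monotone c) (hc1 : 1 ≤ c 1) {B : ℕ}
    (hB : ∀ k, c k ≤ B) (N : ℕ) :
    (#{k ∈ Icc 1 N | 2 * (c k : ℝ) < c (k + 2)} : ℝ) ≤ 3 * log B := by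
  have hpos : ∀ k ∈ Icc 1 N, (0 : ℝ) < c k := fun k hk ↦
    Nat.cast_pos.2 (hc1.trans (hc (mem_Icc.1 hk).1))
  have hcount := card_filter_mul_le_sum (Icc 1 N) (fun k ↦ 2 * (c k : ℝ) < c (k + 2))
    (f := fun k ↦ log (c (k + 2)) - log (c k)) (δ := log 2)
    (fun k hk ↦ sub_nonneg.2 <| log_le_log (hpos k hk) (Nat.cast_le.2 (hc (by omega))))
    (fun k hk hbad ↦ by
      have := log_lt_log (by linarith [hpos k hk]) hbad
      rw [log_mul two_ne_zero (hpos k hk).ne'] at this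
      linarith)
  rw [sum_Icc_one_sub_add_two (fun k ↦ log (c k))] at hcount
  have hlog : ∀ k, 1 ≤ k → 0 ≤ log (c k) ∧ log (c k) ≤ log B := fun k hk ↦
    have hck : (1 : ℝ) ≤ c k := Nat.one_le_cast.2 (hc1.trans (hc hk))
    ⟨log_nonneg hck, log_le_log (by linarith) (Nat.cast_le.2 (hB k))⟩
  have htelescope : (#{k ∈ Icc 1 N | 2 * (c k : ℝ) < c (k + 2)} : ℝ) * log 2 ≤ 2 * log B := by
    linarith [(hlog 1 le_rfl).1, (hlog 2 (by norm_num)).1, (hlog (N + 1) (by omega)).2,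
      (hlog (N + 2) (by omega)).2]
  have hlogB : 0 ≤ log B := (hlog 1 le_rfl).1.trans (hlog 1 le_rfl).2
  nlinarith [log_two_gt_d9,
    (Nat.cast_nonneg _ : (0 : ℝ) ≤ #{k ∈ Icc 1 N | 2 * (c k : ℝ) < c (k + 2)})]

theorem card_filter_levelset_doubling_le {α : Type*} [Fintype α] {F : ℝ → Finset α}
    (hF : Monotone F) (hF0 : (F 0).Nonempty) (M : ℝ) (N : ℕ) :
    (#((Icc 1 N).filter fun k : ℕ ↦ 2 * (#(F (k * M - M)) : ℝ) < #(F (k * M + M))) : ℝ)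
      ≤ 3 * log (Fintype.card α) := by
  rcases le_or_gt 0 M with hM | hM
  · have hshift : ∀ k : ℕ, ((k + 2 : ℕ) : ℝ) * M - M = k * M + M := fun k ↦ by push_cast; ring
    have hc : Monotone fun k : ℕ ↦ #(F (k * M - M)) := fun a b hab ↦ card_le_card <|
      hF (by gcongr)
    simpa only [hshift] using card_filter_two_mul_lt_le hc (by simpa using hF0.card_pos)
      (fun _ ↦ card_le_univ _) N
  · have hnone : ∀ k : ℕ, ¬ 2 * (#(F (k * M - M)) : ℝ) < #(F (k * M + M)) := fun k ↦ by
      have : (#(F (k * M + M)) : ℝ) ≤ #(F (k * M - M)) :=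
        Nat.cast_le.2 (card_le_card (hF (by linarith)))
      linarith [(Nat.cast_nonneg _ : (0 : ℝ) ≤ #(F (k * M - M)))]
    rw [filter_false_of_mem fun k _ ↦ hnone k, card_empty, Nat.cast_zero]
    exact mul_nonneg zero_le_three
      (log_nonneg (Nat.one_le_cast.2 (hF0.card_pos.trans_le (card_le_univ _))))

section Sandwich

variable {α : Type*} {L L' : α → ℝ} {M t : ℝ} {g g' a : α}

theorem le_min_add_of_le_min_add_sub (hlo : ∀ a, L' a ≤ L a) (hhi : ∀ a, L a ≤ L' a + M)
    (hg : ∀ a, L g ≤ L a) (ha : L a ≤ L g + (t - M)) : L' a ≤ L' g' + t := by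
  linarith [hlo a, hhi g', hg g']

theorem le_min_add_add_of_le_min_add (hlo : ∀ a, L' a ≤ L a) (hhi : ∀ a, L a ≤ L' a + M)
    (hg' : ∀ a, L' g' ≤ L' a) (ha : L' a ≤ L' g' + t) : L a ≤ L g + (t + M) := by
  linarith [hlo g, hhi a, hg' g]

end Sandwich

theorem finite_class_levelset_growth_general
    {𝒳 𝒴 𝒴' H : Type*} [Fintype H]
    {n : ℕ} (x : Fin n → 𝒳) (y : Fin n → 𝒴)
    (eval : H → 𝒳 → 𝒴') (ℓ : 𝒴' → 𝒴 → ℝ) (M : ℝ)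
    (hℓ : ∀ (y' : 𝒴') (yy : 𝒴), 0 ≤ ℓ y' yy ∧ ℓ y' yy ≤ M)
    (LS : H → ℝ) (hLS : ∀ h, LS h = ∑ i, ℓ (eval h (x i)) (y i))
    (LSm : Fin n → H → ℝ)
    (hLSm : ∀ i h, LSm i h = ∑ j ∈ Finset.univ.erase i, ℓ (eval h (x j)) (y j))
    (g : H) (hg : ∀ h, LS g ≤ LS h)
    (gm : Fin n → H) (hgm : ∀ i h, LSm i (gm i) ≤ LSm i h)
    (Ht : ℝ → Finset H)
    (hHt : ∀ s, Ht s = Finset.univ.filter fun h => LS h ≤ LS g + s)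
    (Hti : ℝ → Fin n → Finset H)
    (hHti : ∀ s i, Hti s i = Finset.univ.filter fun h => LSm i h ≤ LSm i (gm i) + s)
    (N : ℕ) (hN : N = ⌈12 * Real.log (Fintype.card H)⌉₊) :
    ((((Finset.Icc 1 N).filter fun k : ℕ =>
        2 * ((Ht ((k : ℝ) * M - M)).card : ℝ) < ((Ht ((k : ℝ) * M + M)).card : ℝ)).card : ℝ)
      ≤ 3 * Real.log (Fintype.card H)) ∧
    ((3 / 4 : ℝ) * N ≤
      (((Finset.Icc 1 N).filter fun k : ℕ =>
        ((Ht ((k : ℝ) * M + M)).card : ℝ) ≤ 2 * ((Ht ((k : ℝ) * M - M)).card : ℝ) ∧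
        ∀ i : Fin n, Ht ((k : ℝ) * M - M) ⊆ Hti ((k : ℝ) * M) i ∧
          Hti ((k : ℝ) * M) i ⊆ Ht ((k : ℝ) * M + M)).card : ℝ)) := by
  have hsplit : ∀ i h, LS h = LSm i h + ℓ (eval h (x i)) (y i) := fun i h ↦ by
    rw [hLS, hLSm, sum_erase_add _ _ (mem_univ i)]
  have hlo : ∀ i h, LSm i h ≤ LS h := fun i h ↦ by
    linarith [hsplit i h, (hℓ (eval h (x i)) (y i)).1]
  have hhi : ∀ i h, LS h ≤ LSm i h + M := fun i h ↦ by
    linarith [hsplit i h, (hℓ (eval h (x i)) (y i)).2]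
  have hsandwich : ∀ t i, Ht (t - M) ⊆ Hti t i ∧ Hti t i ⊆ Ht (t + M) := fun t i ↦ by
    rw [hHt, hHt, hHti]
    exact ⟨monotone_filter_right _ fun _ _ ↦ le_min_add_of_le_min_add_sub (hlo i) (hhi i) hg,
      monotone_filter_right _ fun _ _ ↦ le_min_add_add_of_le_min_add (hlo i) (hhi i) (hgm i)⟩
  have hmono : Monotone Ht := fun s s' hss' ↦ by
    rw [hHt, hHt]
    exact monotone_filter_right _ fun _ _ hh ↦ by linarith
  have hbad := card_filter_levelset_doubling_le hmono ⟨g, by simp [hHt]⟩ M N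
  refine ⟨hbad, ?_⟩
  rw [filter_congr fun k _ ↦ (and_iff_left (fun i ↦ hsandwich _ i)).trans not_lt.symm]
  have hcard := card_filter_add_card_filter_not (s := Icc 1 N)
    (fun k : ℕ ↦ 2 * ((Ht ((k : ℝ) * M - M)).card : ℝ) < ((Ht ((k : ℝ) * M + M)).card : ℝ))
  rw [Nat.card_Icc, add_tsub_cancel_right] at hcard
  have hN12 : 12 * log (Fintype.card H) ≤ N := hN ▸ Nat.le_ceil _
  have hcardR := congrArg (Nat.cast (R := ℝ)) hcard
  push_cast at hcardR
  linarith

/-- **Level-set growth for finite classes under bounded loss.**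
`H` is a finite hypothesis class with `|H| ≥ 2`, the loss takes values in `[0, M]`,
`μ` is the counting measure (`Finset.card`) and `𝒯 = {M, 2M, …, N·M}` with
`N = ⌈12 ln|H|⌉`.  Then the number of tolerances `t = k·M ∈ 𝒯` with
`|ℋ_{t+M}| > 2|ℋ_{t−M}|` is at most `3 ln|H|`, and consequently at least `(3/4)·|𝒯|`
tolerances satisfy both `|ℋ_{t+M}| ≤ 2|ℋ_{t−M}|` and `ℋ_{t−M} ⊆ ℋ_{t,i} ⊆ ℋ_{t+M}` for
all `i`. -/
theorem finite_class_levelset_growth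
    {𝒳 𝒴 𝒴' H : Type*} [Fintype H] (hH : 2 ≤ Fintype.card H)
    {n : ℕ} (x : Fin n → 𝒳) (y : Fin n → 𝒴)
    (eval : H → 𝒳 → 𝒴') (ℓ : 𝒴' → 𝒴 → ℝ) (M : ℝ)
    (hℓ : ∀ (y' : 𝒴') (yy : 𝒴), 0 ≤ ℓ y' yy ∧ ℓ y' yy ≤ M)
    (LS : H → ℝ) (hLS : ∀ h, LS h = ∑ i, ℓ (eval h (x i)) (y i))
    (LSm : Fin n → H → ℝ)
    (hLSm : ∀ i h, LSm i h = ∑ j ∈ Finset.univ.erase i, ℓ (eval h (x j)) (y j))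
    (g : H) (hg : ∀ h, LS g ≤ LS h)
    (gm : Fin n → H) (hgm : ∀ i h, LSm i (gm i) ≤ LSm i h)
    (Ht : ℝ → Finset H)
    (hHt : ∀ s, Ht s = Finset.univ.filter fun h => LS h ≤ LS g + s)
    (Hti : ℝ → Fin n → Finset H)
    (hHti : ∀ s i, Hti s i = Finset.univ.filter fun h => LSm i h ≤ LSm i (gm i) + s)
    (N : ℕ) (hN : N = ⌈12 * Real.log (Fintype.card H)⌉₊) :
    ((((Finset.Icc 1 N).filter fun k : ℕ =>
        2 * ((Ht ((k : ℝ) * M - M)).card : ℝ) < ((Ht ((k : ℝ) * M + M)).card : ℝ)).card : ℝ)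
      ≤ 3 * Real.log (Fintype.card H)) ∧
    ((3 / 4 : ℝ) * N ≤
      (((Finset.Icc 1 N).filter fun k : ℕ =>
        ((Ht ((k : ℝ) * M + M)).card : ℝ) ≤ 2 * ((Ht ((k : ℝ) * M - M)).card : ℝ) ∧
        ∀ i : Fin n, Ht ((k : ℝ) * M - M) ⊆ Hti ((k : ℝ) * M) i ∧
          Hti ((k : ℝ) * M) i ⊆ Ht ((k : ℝ) * M + M)).card : ℝ)) :=
  finite_class_levelset_growth_general x y eval ℓ M hℓ LS hLS LSm hLSm g hg gm hgm Ht hHt Hti hHti N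
    hN
end

section
/- Volume lower bound for the logistic level set: Assume ‖x_i‖₂ ≤ R for all i, let ℋ = {θ ∈ ℝ^d : ‖θ‖₂ ≤ r} with r, R > 0 and d ≥ 1, and assume A = Σ_{i=1}^n x_i x_iᵀ is positive definite. Let B = {θ ∈ ℝ^d : θᵀAθ ≤ R_B²} with R_B = √n·rR + √(rR), and let μ_B be the uniform probability measure on B. Then μ_B(ℋ_{rR}) ≥ (max(8, 2nrR))^{−d}; equivalently, log(1/μ_B(ℋ_{rR})) ≤ d·log(max(8, 2nrR)). -/
/-!
Write `‖v‖_A = ‖(⟪x_i, v⟫)_i‖` and `g = -∇L_S(θ*)`. Each term of the logistic loss satisfies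
the quadratic upper bound `ℓ(z + δ) ≤ ℓ(z) + ℓ'(z) δ + δ²`, so
`L_S(θ* + v) ≤ L_S(θ*) - ⟪g, v⟫ + ‖v‖_A²`. Hence every `θ* + v` with `‖v‖_A ≤ √(rR)` and
`⟪g, v⟫ ≥ 0` lies in `ℋ_{rR}`, and, by the triangle inequality for `‖·‖_A`, also in `B`.
The `A`-ball of radius `√(rR)` is `B` scaled by `(√(nrR) + 1)⁻¹`, and the half-space
`⟪g, v⟫ ≥ 0` keeps at least half of it by central symmetry, so
`μ_B(ℋ_{rR}) ≥ ½ (√(nrR) + 1)^{-d} ≥ max(8, 2nrR)^{-d}`.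
-/

open scoped RealInnerProductSpace Pointwise

open MeasureTheory Metric Real Finset

lemma one_sub_add_mul_exp_pos {p : ℝ} (hp₀ : 0 ≤ p) (hp₁ : p ≤ 1) (t : ℝ) :
    0 < 1 - p + p * exp t := by
  rcases hp₀.eq_or_lt with rfl | hp
  · norm_num
  · nlinarith [exp_pos t]

lemma log_one_sub_add_mul_exp_le {p : ℝ} (hp₀ : 0 ≤ p) (hp₁ : p ≤ 1) (t : ℝ) :
    log (1 - p + p * exp t) ≤ p * t + t ^ 2 := by
  have hpos := one_sub_add_mul_exp_pos hp₀ hp₁ t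
  rcases le_or_gt t (-1) with ht | ht
  · have : log (1 - p + p * exp t) ≤ 0 :=
      log_nonpos hpos.le (by nlinarith [exp_le_one_iff.2 (ht.trans (by norm_num))])
    nlinarith
  rcases le_or_gt t 1 with ht' | ht'
  · have hexp := abs_le.1 (abs_exp_sub_one_sub_id_le (abs_le.2 ⟨ht.le, ht'⟩))
    nlinarith [log_le_sub_one_of_pos hpos]
  · have : log (1 - p + p * exp t) ≤ t :=
      (log_le_log hpos (by nlinarith [add_one_le_exp t])).trans_eq (log_exp t)
    nlinarith

lemma log_one_add_exp_neg_add_le (z δ : ℝ) :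
    log (1 + exp (-(z + δ))) ≤ log (1 + exp (-z)) - (1 + exp z)⁻¹ * δ + δ ^ 2 := by
  set p := (1 + exp z)⁻¹ with hp
  have hp₀ : 0 ≤ p := by positivity
  have hp₁ : p ≤ 1 := inv_le_one_of_one_le₀ (by linarith [exp_pos z])
  have hfactor : 1 + exp (-(z + δ)) = (1 + exp (-z)) * (1 - p + p * exp (-δ)) := by
    simp only [hp, neg_add, exp_add, exp_neg]
    field_simp
    ring
  rw [hfactor, log_mul (by positivity) (one_sub_add_mul_exp_pos hp₀ hp₁ _).ne']
  linarith [log_one_sub_add_mul_exp_le hp₀ hp₁ (-δ), neg_sq δ]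

lemma two_mul_add_one_le_max {s : ℝ} (hs : 0 ≤ s) : 2 * (s + 1) ≤ max 8 (2 * s ^ 2) := by
  rcases le_total s 2 with h | h
  · exact le_max_of_le_left (by linarith)
  · exact le_max_of_le_right (by nlinarith)

lemma inv_max_pow_le {t : ℝ} (ht : 0 ≤ t) {d : ℕ} (hd : d ≠ 0) :
    (max 8 (2 * t))⁻¹ ^ d ≤ 2⁻¹ * (√t + 1)⁻¹ ^ d :=
  calc (max 8 (2 * t))⁻¹ ^ d ≤ (2⁻¹ * (√t + 1)⁻¹) ^ d := by
        gcongr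
        rw [← mul_inv]
        refine inv_anti₀ (by positivity) ?_
        simpa [sq_sqrt ht] using two_mul_add_one_le_max (sqrt_nonneg t)
    _ = 2⁻¹ ^ d * (√t + 1)⁻¹ ^ d := mul_pow _ _ _
    _ ≤ 2⁻¹ * (√t + 1)⁻¹ ^ d := by
        gcongr
        exact pow_le_of_le_one (by norm_num) (by norm_num) hd

lemma measure_le_two_mul_measure_inter_nonneg {G : Type*} [AddGroup G] [MeasurableSpace G]
    [MeasurableNeg G] (μ : Measure G) [μ.IsNegInvariant] {s : Set G} (hs : -s = s)
    (f : G →+ ℝ) : μ s ≤ 2 * μ (s ∩ {v | 0 ≤ f v}) := by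
  set H := {v | 0 ≤ f v}
  have hneg : -(s ∩ Hᶜ) ⊆ s ∩ H := by
    rintro v ⟨hv, hvH⟩
    refine ⟨by rw [← hs]; exact hv, ?_⟩
    simp only [H, Set.mem_compl_iff, Set.mem_ofPred_eq, map_neg, not_le] at hvH ⊢
    linarith
  calc μ s = μ (s ∩ H ∪ s ∩ Hᶜ) := by rw [Set.inter_union_compl]
    _ ≤ μ (s ∩ H) + μ (-(s ∩ Hᶜ)) := by rw [Measure.measure_neg]; exact measure_union_le _ _
    _ ≤ μ (s ∩ H) + μ (s ∩ H) := by gcongr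
    _ = 2 * μ (s ∩ H) := (two_mul _).symm

lemma inv_two_mul_ofReal_pow_mul_measure_le {E : Type*} [NormedAddCommGroup E]
    [NormedSpace ℝ E] [FiniteDimensional ℝ E] [MeasurableSpace E] [BorelSpace E] (μ : Measure E)
    [μ.IsAddHaarMeasure] {S : Set E} (hS : -S = S) {c : ℝ} (hc : 0 ≤ c) (θ : E) (f : E →+ ℝ) :
    2⁻¹ * ENNReal.ofReal (c ^ Module.finrank ℝ E) * μ S ≤ μ (θ +ᵥ (c • S ∩ {v | 0 ≤ f v})) := by
  rw [measure_vadd, mul_assoc, ← abs_of_nonneg (pow_nonneg hc _), ← Measure.addHaar_smul,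
    ENNReal.inv_mul_le_iff two_ne_zero ENNReal.ofNat_ne_top]
  exact measure_le_two_mul_measure_inter_nonneg μ (by rw [← Set.smul_set_neg, hS]) f

section Preimage

variable {𝕜 E F : Type*} [NormedField 𝕜] [AddCommGroup E] [Module 𝕜 E]
  [NormedAddCommGroup F] [NormedSpace 𝕜 F] (T : E →ₗ[𝕜] F) {ρ : ℝ}

lemma neg_preimage_closedBall_zero : -(T ⁻¹' closedBall 0 ρ) = T ⁻¹' closedBall 0 ρ := by
  ext v
  simp

lemma smul_preimage_closedBall_zero {c : 𝕜} (hc : c ≠ 0) (hρ : 0 ≤ ρ) :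
    c • T ⁻¹' closedBall 0 ρ = T ⁻¹' closedBall 0 (‖c‖ * ρ) := by
  rw [← IsUnit.preimage_smul_set T (IsUnit.mk0 c hc), smul_closedBall c 0 hρ, smul_zero]

end Preimage

section Design

variable {ι E : Type*} [Fintype ι] [NormedAddCommGroup E] [InnerProductSpace ℝ E]

noncomputable def designMap (x : ι → E) : E →ₗ[ℝ] EuclideanSpace ℝ ι :=
  (EuclideanSpace.equiv ι ℝ).symm.toLinearMap ∘ₗ LinearMap.pi fun i => innerₛₗ ℝ (x i)

lemma norm_designMap_sq (x : ι → E) (v : E) : ‖designMap x v‖ ^ 2 = ∑ i, ⟪x i, v⟫ ^ 2 := by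
  simp [designMap, EuclideanSpace.real_norm_sq_eq]

lemma setOf_sum_inner_sq_le_sq (x : ι → E) {ρ : ℝ} (hρ : 0 ≤ ρ) :
    {v : E | ∑ i, ⟪x i, v⟫ ^ 2 ≤ ρ ^ 2} = designMap x ⁻¹' closedBall 0 ρ := by
  ext v
  simp [← norm_designMap_sq, pow_le_pow_iff_left₀ (norm_nonneg _) hρ]

lemma norm_designMap_le {x : ι → E} {R : ℝ} (hR : 0 ≤ R) (hx : ∀ i, ‖x i‖ ≤ R) (v : E) :
    ‖designMap x v‖ ≤ √(Fintype.card ι) * (R * ‖v‖) := by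
  have hinner (i : ι) : ⟪x i, v⟫ ^ 2 ≤ (R * ‖v‖) ^ 2 := by
    have h : |⟪x i, v⟫| ≤ R * ‖v‖ := (abs_real_inner_le_norm _ _).trans (by gcongr; exact hx i)
    exact sq_le_sq.2 (h.trans (le_abs_self _))
  rw [← sqrt_sq (norm_nonneg _), norm_designMap_sq, ← sqrt_sq (by positivity : 0 ≤ R * ‖v‖),
    ← sqrt_mul (Nat.cast_nonneg _)]
  gcongr
  calc ∑ i, ⟪x i, v⟫ ^ 2 ≤ ∑ _i : ι, (R * ‖v‖) ^ 2 := sum_le_sum fun i _ => hinner i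
    _ = Fintype.card ι * (R * ‖v‖) ^ 2 := by simp

lemma norm_designMap_add_le {x : ι → E} {R r : ℝ} (hR : 0 ≤ R) (hx : ∀ i, ‖x i‖ ≤ R) {θ : E}
    (hθ : ‖θ‖ ≤ r) (v : E) :
    ‖designMap x (θ + v)‖ ≤ √(Fintype.card ι) * (R * r) + ‖designMap x v‖ :=
  calc ‖designMap x (θ + v)‖ ≤ ‖designMap x θ‖ + ‖designMap x v‖ := by
        rw [map_add]; exact norm_add_le _ _
    _ ≤ √(Fintype.card ι) * (R * r) + ‖designMap x v‖ := by
        gcongr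
        exact (norm_designMap_le hR hx θ).trans (by gcongr)

noncomputable def logisticLoss (x : ι → E) (y : ι → ℝ) (θ : E) : ℝ :=
  ∑ i, log (1 + exp (-(y i * ⟪x i, θ⟫)))

noncomputable def logisticNegGrad (x : ι → E) (y : ι → ℝ) (θ : E) : E :=
  ∑ i, ((1 + exp (y i * ⟪x i, θ⟫))⁻¹ * y i) • x i

lemma logisticLoss_add_le (x : ι → E) {y : ι → ℝ} (hy : ∀ i, |y i| ≤ 1) (θ v : E) :
    logisticLoss x y (θ + v) ≤
      logisticLoss x y θ - ⟪logisticNegGrad x y θ, v⟫ + ‖designMap x v‖ ^ 2 := by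
  have hterm (i : ι) : log (1 + exp (-(y i * ⟪x i, θ + v⟫))) ≤
      log (1 + exp (-(y i * ⟪x i, θ⟫))) - (1 + exp (y i * ⟪x i, θ⟫))⁻¹ * y i * ⟪x i, v⟫ +
        ⟪x i, v⟫ ^ 2 := by
    have hy2 : y i ^ 2 ≤ 1 := by nlinarith [abs_le.1 (hy i), sq_abs (y i)]
    have hδ : (y i * ⟪x i, v⟫) ^ 2 ≤ ⟪x i, v⟫ ^ 2 := by
      nlinarith [sq_nonneg ⟪x i, v⟫]
    have := log_one_add_exp_neg_add_le (y i * ⟪x i, θ⟫) (y i * ⟪x i, v⟫)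
    rw [inner_add_right, mul_add]
    linarith
  have hsum := sum_le_sum fun i (_ : i ∈ univ) => hterm i
  simp only [sum_add_distrib, sum_sub_distrib] at hsum
  simpa [logisticLoss, logisticNegGrad, norm_designMap_sq, sum_inner, inner_smul_left, mul_assoc]
    using hsum

end Design

theorem logistic_levelset_volume_lower_bound_general
    {d n : ℕ} (hd : 1 ≤ d) (r R : ℝ) (hr : 0 < r) (hR : 0 < R)
    (x : Fin n → EuclideanSpace ℝ (Fin d)) (hx : ∀ i, ‖x i‖ ≤ R)
    (y : Fin n → ℝ) (hy : ∀ i, y i = 1 ∨ y i = -1)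
    (L : EuclideanSpace ℝ (Fin d) → ℝ)
    (hL : ∀ θ, L θ = ∑ i, -Real.log (1 / (1 + Real.exp (-(y i * ⟪x i, θ⟫)))))
    (θs : EuclideanSpace ℝ (Fin d)) (hθs : ‖θs‖ ≤ r)
    -- ℋ_A = {ϑ : inf_{θ ∈ ℋ} ‖ϑ − θ‖_A² ≤ rR}
    (HA : Set (EuclideanSpace ℝ (Fin d)))
    (hHA : HA = {ϑ | ∃ θ : EuclideanSpace ℝ (Fin d),
      ‖θ‖ ≤ r ∧ ∑ i, ⟪x i, ϑ - θ⟫ ^ 2 ≤ r * R})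
    -- the level set ℋ_{rR}
    (Hlev : Set (EuclideanSpace ℝ (Fin d)))
    (hHlev : Hlev = {θ ∈ HA | L θ ≤ L θs + r * R})
    -- the ball B
    (B : Set (EuclideanSpace ℝ (Fin d)))
    (hB : B = {θ | ∑ i, ⟪x i, θ⟫ ^ 2 ≤ (Real.sqrt n * r * R + Real.sqrt (r * R)) ^ 2}) :
    ENNReal.ofReal ((max 8 (2 * n * r * R))⁻¹ ^ d) * MeasureTheory.volume B
      ≤ MeasureTheory.volume (Hlev ∩ B) := by
  have ha : 0 < r * R := mul_pos hr hR
  set s := √(n * (r * R)) with hs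
  set T := designMap x
  set g := logisticNegGrad x y θs
  have hL' (θ) : L θ = logisticLoss x y θ := by simp [hL, logisticLoss, log_inv]
  have hy' (i) : |y i| ≤ 1 := by rcases hy i with h | h <;> simp [h]
  have hRB : √n * r * R + √(r * R) = (s + 1) * √(r * R) := by
    rw [hs, sqrt_mul (Nat.cast_nonneg _)]
    linear_combination (-√(n : ℝ)) * mul_self_sqrt ha.le
  have hB' : B = T ⁻¹' closedBall 0 ((s + 1) * √(r * R)) := by
    rw [hB, hRB, setOf_sum_inner_sq_le_sq x (by positivity)]
  have hsB : (s + 1)⁻¹ • B = T ⁻¹' closedBall 0 √(r * R) := by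
    rw [hB', smul_preimage_closedBall_zero _ (by positivity) (by positivity), norm_inv,
      Real.norm_of_nonneg (by positivity), inv_mul_cancel_left₀ (by positivity)]
  have hsub : θs +ᵥ ((s + 1)⁻¹ • B ∩ {v | 0 ≤ ⟪g, v⟫}) ⊆ Hlev ∩ B := by
    rintro _ ⟨v, ⟨hvB, hvg⟩, rfl⟩
    change θs + v ∈ Hlev ∩ B
    rw [hsB, Set.mem_preimage, mem_closedBall_zero_iff] at hvB
    have hv : ‖T v‖ ^ 2 ≤ r * R := by
      simpa [sq_sqrt ha.le] using pow_le_pow_left₀ (norm_nonneg _) hvB 2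
    have hTθ := norm_designMap_add_le hR.le hx hθs v
    rw [Fintype.card_fin] at hTθ
    rw [hHlev, hHA, hB', Set.mem_inter_iff, Set.mem_ofPred_eq, hL', hL', Set.mem_preimage,
      mem_closedBall_zero_iff, ← hRB]
    refine ⟨⟨⟨θs, hθs, by rwa [add_sub_cancel_left, ← norm_designMap_sq]⟩, ?_⟩, by linarith⟩
    linarith [logisticLoss_add_le x hy' θs v, show 0 ≤ ⟪g, v⟫ from hvg]
  calc ENNReal.ofReal ((max 8 (2 * n * r * R))⁻¹ ^ d) * volume B
      ≤ 2⁻¹ * ENNReal.ofReal ((s + 1)⁻¹ ^ d) * volume B := by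
        gcongr
        rw [← ENNReal.ofReal_ofNat 2, ← ENNReal.ofReal_inv_of_pos two_pos,
          ← ENNReal.ofReal_mul (by norm_num)]
        refine ENNReal.ofReal_le_ofReal ?_
        simpa only [mul_assoc] using
          inv_max_pow_le (by positivity : (0 : ℝ) ≤ n * (r * R)) (by omega)
    _ ≤ volume (θs +ᵥ ((s + 1)⁻¹ • B ∩ {v | 0 ≤ ⟪g, v⟫})) := by
        have hhalf := inv_two_mul_ofReal_pow_mul_measure_le volume
          (show -B = B by rw [hB', neg_preimage_closedBall_zero]) (c := (s + 1)⁻¹)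
          (by positivity) θs (innerₛₗ ℝ g).toAddMonoidHom
        rwa [finrank_euclideanSpace_fin] at hhalf
    _ ≤ volume (Hlev ∩ B) := measure_mono hsub

/-- **Volume lower bound for the logistic level set.**
Logistic setting with `‖x_i‖ ≤ R`, parameter ball `ℋ = {‖θ‖ ≤ r}`, positive definite
`A` (encoded via the quadratic form `u ↦ ∑ i ⟪x_i, u⟫²`), `B` the ball
`{θ : θᵀAθ ≤ R_B²}` with `R_B = √n·rR + √(rR)`, and `μ_B` the uniform probability
measure on `B` (so `μ_B(E) = vol(E ∩ B)/vol(B)`).  Then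
`μ_B(ℋ_{rR}) ≥ (max(8, 2nrR))^{−d}`, stated as
`(max(8, 2nrR))^{−d} · vol(B) ≤ vol(ℋ_{rR} ∩ B)`. -/
theorem logistic_levelset_volume_lower_bound
    {d n : ℕ} (hd : 1 ≤ d) (r R : ℝ) (hr : 0 < r) (hR : 0 < R)
    (x : Fin n → EuclideanSpace ℝ (Fin d)) (hx : ∀ i, ‖x i‖ ≤ R)
    (y : Fin n → ℝ) (hy : ∀ i, y i = 1 ∨ y i = -1)
    -- A = ∑ x_i x_iᵀ is positive definite
    (hA : ∀ u : EuclideanSpace ℝ (Fin d), u ≠ 0 → 0 < ∑ i, ⟪x i, u⟫ ^ 2)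
    (L : EuclideanSpace ℝ (Fin d) → ℝ)
    (hL : ∀ θ, L θ = ∑ i, -Real.log (1 / (1 + Real.exp (-(y i * ⟪x i, θ⟫)))))
    (θs : EuclideanSpace ℝ (Fin d)) (hθs : ‖θs‖ ≤ r)
    (hθsmin : ∀ θ : EuclideanSpace ℝ (Fin d), ‖θ‖ ≤ r → L θs ≤ L θ)
    -- ℋ_A = {ϑ : inf_{θ ∈ ℋ} ‖ϑ − θ‖_A² ≤ rR}
    (HA : Set (EuclideanSpace ℝ (Fin d)))
    (hHA : HA = {ϑ | ∃ θ : EuclideanSpace ℝ (Fin d),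
      ‖θ‖ ≤ r ∧ ∑ i, ⟪x i, ϑ - θ⟫ ^ 2 ≤ r * R})
    -- the level set ℋ_{rR}
    (Hlev : Set (EuclideanSpace ℝ (Fin d)))
    (hHlev : Hlev = {θ ∈ HA | L θ ≤ L θs + r * R})
    -- the ball B
    (B : Set (EuclideanSpace ℝ (Fin d)))
    (hB : B = {θ | ∑ i, ⟪x i, θ⟫ ^ 2 ≤ (Real.sqrt n * r * R + Real.sqrt (r * R)) ^ 2}) :
    ENNReal.ofReal ((max 8 (2 * n * r * R))⁻¹ ^ d) * MeasureTheory.volume B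
      ≤ MeasureTheory.volume (Hlev ∩ B) :=
  logistic_levelset_volume_lower_bound_general hd r R hr hR x hx y hy L hL θs hθs HA hHA Hlev hHlev
    B hB
end
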